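/- Let H be a nonzero real Hilbert space and B : H × H → ℝ a continuous symmetric bilinear form with B(u,u) > 0 for every u ≠ 0, whose quadratic form q(u) = B(u,u) is sequentially weakly continuous. Then μ₁ := inf{‖u‖² : u ∈ H, B(u,u) = 1} is attained at some φ₁ with B(φ₁, φ₁) = 1; furthermore μ₁ > 0, μ₁ = inf{‖u‖²/B(u,u) : u ∈ H, u ≠ 0} (Rayleigh quotient characterization), and φ₁ satisfies the eigenvalue equation ⟨φ₁, v⟩ = μ₁ B(φ₁, v) for all v ∈ H. -/

import Mathlib

open Filter Topology
open scoped RealInnerProductSpace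

/-!
A minimizing sequence for `‖u‖²` on `{B(u,u) = 1}` is bounded, so by the sequential
Banach–Alaoglu theorem (applied in the separable closed span of the sequence) a subsequence
converges weakly. Weak continuity of `q` keeps the limit `φ₁` on the constraint set, and the norm
is weakly lower semicontinuous, so `φ₁` is a minimizer. Scaling `u ↦ u / √B(u,u)` identifies `μ₁`
with the infimum of the Rayleigh quotient, so `‖z‖² - μ₁ B(z,z)` is a positive semidefinite
symmetric form vanishing at `φ₁`; by Cauchy–Schwarz for such forms `φ₁` lies in its kernel, which
is the eigenvalue equation.
-/

theorem exists_subseq_tendsto_inner_of_separableSpace {H : Type*} [NormedAddCommGroup H]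
    [InnerProductSpace ℝ H] [CompleteSpace H] [TopologicalSpace.SeparableSpace H]
    {u : ℕ → H} {C : ℝ} (hu : ∀ n, ‖u n‖ ≤ C) :
    ∃ (x : H) (φ : ℕ → ℕ), StrictMono φ ∧
      ∀ w, Tendsto (fun k => ⟪u (φ k), w⟫) atTop (𝓝 ⟪x, w⟫) := by
  let f : ℕ → WeakDual ℝ H := fun n => WeakDual.toStrongDual.symm (innerSL ℝ (u n))
  have hf : ∀ n, f n ∈ WeakDual.toStrongDual ⁻¹' Metric.closedBall (0 : StrongDual ℝ H) C :=
    fun n => by simpa [f] using hu n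
  obtain ⟨g, -, φ, hφ, hg⟩ := WeakDual.isSeqCompact_closedBall ℝ H 0 C hf
  refine ⟨(InnerProductSpace.toDual ℝ H).symm (WeakDual.toStrongDual g), φ, hφ, fun w => ?_⟩
  rw [InnerProductSpace.toDual_symm_apply]
  exact ((WeakDual.eval_continuous w).tendsto g).comp hg

theorem exists_subseq_tendsto_inner {H : Type*} [NormedAddCommGroup H]
    [InnerProductSpace ℝ H] [CompleteSpace H]
    {u : ℕ → H} {C : ℝ} (hu : ∀ n, ‖u n‖ ≤ C) :
    ∃ (x : H) (φ : ℕ → ℕ), StrictMono φ ∧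
      ∀ w, Tendsto (fun k => ⟪u (φ k), w⟫) atTop (𝓝 ⟪x, w⟫) := by
  set S := Submodule.span ℝ (Set.range u)
  set K := S.topologicalClosure
  have : CompleteSpace K := S.isClosed_topologicalClosure.completeSpace_coe
  have : TopologicalSpace.SeparableSpace K := by
    refine TopologicalSpace.IsSeparable.separableSpace ?_
    rw [Submodule.topologicalClosure_coe]
    exact (Set.countable_range u).isSeparable.span.closure
  let v : ℕ → K := fun n => ⟨u n, S.le_topologicalClosure (Submodule.subset_span ⟨n, rfl⟩)⟩
  obtain ⟨x, φ, hφ, hx⟩ := exists_subseq_tendsto_inner_of_separableSpace (u := v) (C := C) hu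
  -- `⟪u n, w⟫ = ⟪u n, P w⟫` for the orthogonal projection `P` onto `K`, since `u n ∈ K`.
  exact ⟨x, φ, hφ, fun w => by simpa [v] using hx (K.orthogonalProjectionOnto w)⟩

theorem norm_sq_le_of_tendsto_inner {ι H : Type*} [NormedAddCommGroup H] [InnerProductSpace ℝ H]
    {l : Filter ι} [l.NeBot] {u : ι → H} {x : H} {c : ℝ}
    (hx : Tendsto (fun i => ⟪u i, x⟫) l (𝓝 ⟪x, x⟫)) (hc : Tendsto (fun i => ‖u i‖ ^ 2) l (𝓝 c)) :
    ‖x‖ ^ 2 ≤ c := by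
  have key : ∀ i, 2 * ⟪u i, x⟫ ≤ ‖u i‖ ^ 2 + ‖x‖ ^ 2 := fun i => by
    nlinarith [norm_sub_sq_real (u i) x, sq_nonneg ‖u i - x‖]
  have := le_of_tendsto_of_tendsto' (hx.const_mul 2) (hc.add_const _) key
  rw [real_inner_self_eq_norm_sq] at this
  linarith

section QuadraticForm

variable {H : Type*} [NormedAddCommGroup H] [InnerProductSpace ℝ H] (B : H →L[ℝ] H →L[ℝ] ℝ)

theorem exists_apply_self_eq_one_of_pos {z : H} (hz : 0 < B z z) :
    ∃ w, B w w = 1 ∧ ‖w‖ ^ 2 = ‖z‖ ^ 2 / B z z := by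
  refine ⟨(√(B z z))⁻¹ • z, ?_, ?_⟩
  · simp only [map_smul, smul_apply, smul_eq_mul]
    field_simp
    rw [Real.sq_sqrt hz.le]
  · rw [norm_smul, mul_pow, norm_inv, Real.norm_of_nonneg (Real.sqrt_nonneg _), inv_pow,
      Real.sq_sqrt hz.le, inv_mul_eq_div]

theorem image_norm_sq_eq_image_rayleigh (hpos : ∀ u : H, u ≠ 0 → 0 < B u u) :
    (fun u : H => ‖u‖ ^ 2) '' {u | B u u = 1} =
      (fun u : H => ‖u‖ ^ 2 / B u u) '' {u | u ≠ 0} := by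
  ext a
  constructor
  · rintro ⟨u, hu, rfl⟩
    refine ⟨u, ?_, by simp [hu.out]⟩
    rintro rfl
    simp at hu
  · rintro ⟨z, hz, rfl⟩
    obtain ⟨w, hw, hwz⟩ := exists_apply_self_eq_one_of_pos B (hpos z hz)
    exact ⟨w, hw, hwz⟩

theorem sInf_mul_apply_self_le_norm_sq (hpos : ∀ u : H, u ≠ 0 → 0 < B u u) (z : H) :
    sInf ((fun u : H => ‖u‖ ^ 2) '' {u | B u u = 1}) * B z z ≤ ‖z‖ ^ 2 := by
  rcases eq_or_ne z 0 with rfl | hz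
  · simp
  have hBz := hpos z hz
  obtain ⟨w, hw, hwz⟩ := exists_apply_self_eq_one_of_pos B hBz
  have hle : sInf ((fun u : H => ‖u‖ ^ 2) '' {u | B u u = 1}) ≤ ‖z‖ ^ 2 / B z z :=
    csInf_le ⟨0, by rintro _ ⟨u, -, rfl⟩; positivity⟩ ⟨w, hw, hwz⟩
  rwa [le_div_iff₀ hBz] at hle

theorem inner_eq_mul_apply_of_forall_mul_apply_self_le (hsymm : ∀ u v : H, B u v = B v u)
    {μ : ℝ} (hle : ∀ z, μ * B z z ≤ ‖z‖ ^ 2) {x : H} (hx : ‖x‖ ^ 2 = μ * B x x) (v : H) :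
    ⟪x, v⟫ = μ * B x v := by
  set C : LinearMap.BilinForm ℝ H := innerₗ H - μ • B.toLinearMap₁₂
  have hC : ∀ u v, C u v = ⟪u, v⟫ - μ * B u v := fun u v => by simp [C]
  have hCsymm : LinearMap.IsSymm C := ⟨fun u v => by simp [hC, real_inner_comm, hsymm u v]⟩
  have hCnonneg : ∀ z, 0 ≤ C z z := fun z => by
    rw [hC, real_inner_self_eq_norm_sq]; linarith [hle z]
  have hCx : C x x = 0 := by rw [hC, real_inner_self_eq_norm_sq, hx, sub_self]
  have hCxv : C x v = 0 := by
    rw [LinearMap.mem_ker.mp ((C.apply_apply_same_eq_zero_iff hCnonneg hCsymm).mp hCx)]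
    rfl
  linarith [hC x v]

theorem exists_norm_sq_eq_sInf [CompleteSpace H]
    (hweak : ∀ (u : ℕ → H) (x : H), (∀ w : H, Tendsto (fun n => ⟪u n, w⟫) atTop (𝓝 ⟪x, w⟫)) →
      Tendsto (fun n => B (u n) (u n)) atTop (𝓝 (B x x)))
    (hne : {u : H | B u u = 1}.Nonempty) :
    ∃ x, B x x = 1 ∧ ‖x‖ ^ 2 = sInf ((fun u : H => ‖u‖ ^ 2) '' {u | B u u = 1}) := by
  set A := (fun u : H => ‖u‖ ^ 2) '' {u | B u u = 1}
  have hbdd : BddBelow A := ⟨0, by rintro _ ⟨u, -, rfl⟩; positivity⟩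
  obtain ⟨a, ha_anti, ha_lim, ha_mem⟩ := exists_seq_tendsto_sInf (hne.image _) hbdd
  choose w hw hwa using ha_mem
  replace hw : ∀ n, B (w n) (w n) = 1 := hw
  have hw_bdd : ∀ n, ‖w n‖ ≤ ‖w 0‖ := fun n => by
    have := ha_anti (Nat.zero_le n)
    rw [← hwa, ← hwa] at this
    exact (pow_le_pow_iff_left₀ (norm_nonneg _) (norm_nonneg _) two_ne_zero).mp this
  obtain ⟨x, φ, hφ, hx⟩ := exists_subseq_tendsto_inner hw_bdd
  have hBx : B x x = 1 := by
    refine tendsto_nhds_unique (hweak _ x hx) ?_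
    simp only [hw, tendsto_const_nhds]
  refine ⟨x, hBx, le_antisymm ?_ (csInf_le hbdd ⟨x, hBx, rfl⟩)⟩
  refine norm_sq_le_of_tendsto_inner (hx x) ?_
  simpa only [Function.comp_def, hwa] using ha_lim.comp hφ.tendsto_atTop

end QuadraticForm

/-- Let `H` be a nonzero real Hilbert space and `B` a
continuous symmetric bilinear form with `B(u,u) > 0` for `u ≠ 0`, whose
quadratic form is sequentially weakly continuous. Then
`μ₁ = inf {‖u‖² : B(u,u) = 1}` is attained at some `φ₁` with `B(φ₁,φ₁) = 1`,
`μ₁ > 0`, `μ₁ = inf {‖u‖²/B(u,u) : u ≠ 0}` (Rayleigh quotient), and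
`⟪φ₁, v⟫ = μ₁ B(φ₁, v)` for all `v ∈ H`. -/
theorem stmt10 {H : Type*} [NormedAddCommGroup H] [InnerProductSpace ℝ H]
    [CompleteSpace H] [Nontrivial H] (B : H →L[ℝ] H →L[ℝ] ℝ)
    (hsymm : ∀ u v : H, B u v = B v u)
    (hpos : ∀ u : H, u ≠ 0 → 0 < B u u)
    (hweak : ∀ (u : ℕ → H) (x : H),
      (∀ w : H, Tendsto (fun n => ⟪u n, w⟫) atTop (nhds ⟪x, w⟫)) →
      Tendsto (fun n => B (u n) (u n)) atTop (nhds (B x x))) :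
    ∃ φ₁ : H, B φ₁ φ₁ = 1 ∧
      ‖φ₁‖ ^ 2 = sInf ((fun u : H => ‖u‖ ^ 2) '' {u : H | B u u = 1}) ∧
      0 < sInf ((fun u : H => ‖u‖ ^ 2) '' {u : H | B u u = 1}) ∧
      sInf ((fun u : H => ‖u‖ ^ 2) '' {u : H | B u u = 1}) =
        sInf ((fun u : H => ‖u‖ ^ 2 / B u u) '' {u : H | u ≠ 0}) ∧
      (∀ v : H, ⟪φ₁, v⟫ =
        sInf ((fun u : H => ‖u‖ ^ 2) '' {u : H | B u u = 1}) * B φ₁ v) := by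
  obtain ⟨z, hz⟩ := exists_ne (0 : H)
  obtain ⟨u, hu, -⟩ := exists_apply_self_eq_one_of_pos B (hpos z hz)
  obtain ⟨φ₁, hφ₁, hμ⟩ := exists_norm_sq_eq_sInf B hweak ⟨u, hu⟩
  have hφ₁_ne : φ₁ ≠ 0 := by
    rintro rfl
    simp at hφ₁
  refine ⟨φ₁, hφ₁, hμ, hμ ▸ by positivity, by rw [image_norm_sq_eq_image_rayleigh B hpos], ?_⟩
  exact inner_eq_mul_apply_of_forall_mul_apply_self_le B hsymm
    (sInf_mul_apply_self_le_norm_sq B hpos) (by rw [hφ₁, mul_one, hμ])
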